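/- Orthogonality of the relativistic vorticity to the velocity: Let O ⊂ ℝ^{1+d} be open and let (ϱ,u) be a C¹ solution of the relativistic Euler equations on O with ϱ > 0, p(ϱ)+ϱ > 0, u⁰ > 0 and u^α u_α = −1. Let f : (0,∞) → (0,∞) be C¹ with f'(y)/f(y) = p'(y)/(p(y)+y), set v_α = f(ϱ) u_α, and define the vorticity two-form ω_{αβ} = ∂_α v_β − ∂_β v_α. Then v^α ω_{αβ} = 0 on O for every β. -/

import Mathlib

open Set

noncomputable section

/-- The diagonal entries of the Minkowski metric `m = diag(−1,1,…,1)` on `ℝ^{1+d}`. -/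
def mlt (d : ℕ) (α : Fin (d + 1)) : ℝ := if α = 0 then -1 else 1

/-- Partial derivative `∂_μ` of a function on `ℝ^{1+d}`. -/
def pder (d : ℕ) (μ : Fin (d + 1)) (F : (Fin (d + 1) → ℝ) → ℝ) (q : Fin (d + 1) → ℝ) : ℝ :=
  fderiv ℝ F q (Pi.single μ 1)

/-- The relativistic Euler equations with equation of state `peos` on the set `O`:
`u^μ ∂_μ ϱ + (p+ϱ) ∂_μ u^μ = 0` and `(p+ϱ) u^μ ∂_μ u_α + Π^μ_α ∂_μ p = 0`, where
`Π^μ_α = δ^μ_α + u^μ u_α` and indices are lowered with `m = diag(−1,1,…,1)`. -/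
def RelEuler (d : ℕ) (peos : ℝ → ℝ) (O : Set (Fin (d + 1) → ℝ))
    (ϱ : (Fin (d + 1) → ℝ) → ℝ) (u : (Fin (d + 1) → ℝ) → Fin (d + 1) → ℝ) : Prop :=
  ∀ q ∈ O,
    ((∑ μ, u q μ * pder d μ ϱ q)
      + (peos (ϱ q) + ϱ q) * ∑ μ, pder d μ (fun z => u z μ) q = 0) ∧
    ∀ α, (peos (ϱ q) + ϱ q) * (∑ μ, u q μ * pder d μ (fun z => mlt d α * u z α) q)
        + pder d α (fun z => peos (ϱ z)) q
        + mlt d α * u q α * ∑ μ, u q μ * pder d μ (fun z => peos (ϱ z)) q = 0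

/-- The lowered good velocity `v_α = f(ϱ) m_{αα} u^α` (no summation; `m` diagonal). -/
def vLow (d : ℕ) (f : ℝ → ℝ) (ϱ : (Fin (d + 1) → ℝ) → ℝ)
    (u : (Fin (d + 1) → ℝ) → Fin (d + 1) → ℝ) (α : Fin (d + 1))
    (z : Fin (d + 1) → ℝ) : ℝ :=
  f (ϱ z) * mlt d α * u z α

/-- The relativistic vorticity two-form `ω_{αβ} = ∂_α v_β − ∂_β v_α`. -/
def vort (d : ℕ) (f : ℝ → ℝ) (ϱ : (Fin (d + 1) → ℝ) → ℝ)
    (u : (Fin (d + 1) → ℝ) → Fin (d + 1) → ℝ) (α β : Fin (d + 1))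
    (q : Fin (d + 1) → ℝ) : ℝ :=
  pder d α (vLow d f ϱ u β) q - pder d β (vLow d f ϱ u α) q

/-!
Write `v_α = f(ϱ) u_α`. Then `v^α ω_{αβ} = v^α ∂_α v_β - ½ ∂_β (v^α v_α)`, and the
normalization gives `v^α v_α = -f(ϱ)²`, so the second term is `f f' ∂_β ϱ`. In the first term
the momentum equation replaces `(p + ϱ) u^α ∂_α u_β` by `-p'(ϱ) (∂_β ϱ + u_β u^α ∂_α ϱ)`, and the
choice `f'/f = p'/(p + ϱ)` makes the two contributions cancel.
-/

section PartialDerivatives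

variable {d : ℕ} (μ : Fin (d + 1)) {q : Fin (d + 1) → ℝ}

lemma pder_mul {A B : (Fin (d + 1) → ℝ) → ℝ} (hA : DifferentiableAt ℝ A q)
    (hB : DifferentiableAt ℝ B q) :
    pder d μ (fun z => A z * B z) q = pder d μ A q * B q + A q * pder d μ B q := by
  simp only [pder, fderiv_fun_mul hA hB, add_apply, smul_apply, smul_eq_mul]
  ring

lemma pder_const_mul (c : ℝ) {A : (Fin (d + 1) → ℝ) → ℝ} (hA : DifferentiableAt ℝ A q) :
    pder d μ (fun z => c * A z) q = c * pder d μ A q := by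
  simp [pder, fderiv_const_mul hA]

lemma pder_comp {g : ℝ → ℝ} {ϱ : (Fin (d + 1) → ℝ) → ℝ} (hg : DifferentiableAt ℝ g (ϱ q))
    (hϱ : DifferentiableAt ℝ ϱ q) :
    pder d μ (fun z => g (ϱ z)) q = deriv g (ϱ q) * pder d μ ϱ q := by
  rw [pder, show (fun z => g (ϱ z)) = g ∘ ϱ from rfl,
    (hg.hasDerivAt.comp_hasFDerivAt q hϱ.hasFDerivAt).fderiv]
  rfl

lemma pder_sum {ι : Type*} (s : Finset ι) {A : ι → (Fin (d + 1) → ℝ) → ℝ}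
    (h : ∀ i ∈ s, DifferentiableAt ℝ (A i) q) :
    pder d μ (fun z => ∑ i ∈ s, A i z) q = ∑ i ∈ s, pder d μ (A i) q := by
  simp [pder, fderiv_fun_sum h]

lemma pder_of_eventuallyEq_const {F : (Fin (d + 1) → ℝ) → ℝ} {c : ℝ}
    (h : F =ᶠ[nhds q] fun _ => c) : pder d μ F q = 0 := by
  simp [pder, h.fderiv_eq]

end PartialDerivatives

section Vorticity

variable {d : ℕ} {u : (Fin (d + 1) → ℝ) → Fin (d + 1) → ℝ} {q : Fin (d + 1) → ℝ}

lemma sum_mlt_mul_pder_eq_zero (μ : Fin (d + 1))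
    (hu : ∀ α, DifferentiableAt ℝ (fun z => u z α) q) {c : ℝ}
    (hnorm : (fun z => ∑ α, mlt d α * u z α * u z α) =ᶠ[nhds q] fun _ => c) :
    ∑ α, mlt d α * u q α * pder d μ (fun z => u z α) q = 0 := by
  have hsquare : ∀ α, pder d μ (fun z => mlt d α * u z α * u z α) q
      = 2 * (mlt d α * u q α * pder d μ (fun z => u z α) q) := fun α => by
    rw [pder_mul μ ((hu α).const_mul _) (hu α), pder_const_mul μ _ (hu α)]
    ring
  have hdiff : ∀ α, DifferentiableAt ℝ (fun z => mlt d α * u z α * u z α) q := fun α =>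
    ((hu α).const_mul _).mul (hu α)
  have h := pder_of_eventuallyEq_const μ hnorm
  rw [pder_sum μ _ fun α _ => hdiff α,
    Finset.sum_congr rfl fun α _ => hsquare α, ← Finset.mul_sum] at h
  linarith

variable {f : ℝ → ℝ} {ϱ : (Fin (d + 1) → ℝ) → ℝ}

lemma pder_vLow (α μ : Fin (d + 1)) (hf : DifferentiableAt ℝ f (ϱ q))
    (hϱ : DifferentiableAt ℝ ϱ q) (hu : DifferentiableAt ℝ (fun z => u z α) q) :
    pder d μ (vLow d f ϱ u α) q = mlt d α *
      (deriv f (ϱ q) * pder d μ ϱ q * u q α + f (ϱ q) * pder d μ (fun z => u z α) q) := by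
  have hvLow : vLow d f ϱ u α = fun z => mlt d α * (f (ϱ z) * u z α) := by
    funext z
    simp only [vLow]
    ring
  have hfϱ := DifferentiableAt.fun_comp' q hf hϱ
  rw [hvLow, pder_const_mul μ _ (hfϱ.fun_mul hu), pder_mul μ hfϱ hu, pder_comp μ hf hϱ]

lemma sum_mul_vort_eq (β : Fin (d + 1)) (hf : DifferentiableAt ℝ f (ϱ q))
    (hϱ : DifferentiableAt ℝ ϱ q) (hu : ∀ α, DifferentiableAt ℝ (fun z => u z α) q) :
    ∑ α, f (ϱ q) * u q α * vort d f ϱ u α β q =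
      f (ϱ q) * deriv f (ϱ q) * (mlt d β * u q β * ∑ α, u q α * pder d α ϱ q
          - pder d β ϱ q * ∑ α, mlt d α * u q α * u q α)
        + f (ϱ q) ^ 2 * (mlt d β * ∑ α, u q α * pder d α (fun z => u z β) q
          - ∑ α, mlt d α * u q α * pder d β (fun z => u z α) q) := by
  simp only [vort, pder_vLow _ _ hf hϱ (hu _), Finset.mul_sum, ← Finset.sum_sub_distrib,
    ← Finset.sum_add_distrib]
  exact Finset.sum_congr rfl fun α _ => by ring

lemma RelEuler.momentum_eq {peos : ℝ → ℝ} {O : Set (Fin (d + 1) → ℝ)}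
    (heuler : RelEuler d peos O ϱ u) (hq : q ∈ O) (β : Fin (d + 1))
    (hp : DifferentiableAt ℝ peos (ϱ q)) (hϱ : DifferentiableAt ℝ ϱ q)
    (hu : DifferentiableAt ℝ (fun z => u z β) q) :
    (peos (ϱ q) + ϱ q) * (mlt d β * ∑ μ, u q μ * pder d μ (fun z => u z β) q)
      + deriv peos (ϱ q) * (pder d β ϱ q + mlt d β * u q β * ∑ μ, u q μ * pder d μ ϱ q) = 0 := by
  have h := (heuler q hq).2 β
  simp only [pder_const_mul _ _ hu, pder_comp _ hp hϱ, mul_left_comm (u q _),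
    ← Finset.mul_sum] at h
  linear_combination h

end Vorticity

theorem relativistic_vorticity_orthogonality_general
    (d : ℕ) (peos f : ℝ → ℝ)
    (O : Set (Fin (d + 1) → ℝ)) (hO : IsOpen O)
    (ϱ : (Fin (d + 1) → ℝ) → ℝ) (u : (Fin (d + 1) → ℝ) → Fin (d + 1) → ℝ)
    (hp : ContDiffOn ℝ 1 peos (Ioi 0))
    (hϱ : ContDiffOn ℝ 1 ϱ O) (hu : ContDiffOn ℝ 1 u O)
    (hϱpos : ∀ q ∈ O, 0 < ϱ q)
    (hpϱ : ∀ q ∈ O, 0 < peos (ϱ q) + ϱ q)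
    (hnorm : ∀ q ∈ O, ∑ α, mlt d α * u q α * u q α = -1)
    (hf : ContDiffOn ℝ 1 f (Ioi 0))
    (hfode : ∀ y > (0 : ℝ), deriv f y * (peos y + y) = deriv peos y * f y)
    (heuler : RelEuler d peos O ϱ u) :
    ∀ q ∈ O, ∀ β : Fin (d + 1),
      ∑ α, f (ϱ q) * u q α * vort d f ϱ u α β q = 0 := by
  intro q hq β
  have hqO : O ∈ nhds q := hO.mem_nhds hq
  have hϱq : ϱ q ∈ Ioi 0 := hϱpos q hq
  have hϱd : DifferentiableAt ℝ ϱ q := (hϱ.contDiffAt hqO).differentiableAt_one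
  have hud : ∀ α, DifferentiableAt ℝ (fun z => u z α) q :=
    differentiableAt_pi.mp (hu.contDiffAt hqO).differentiableAt_one
  have hfd : DifferentiableAt ℝ f (ϱ q) :=
    (hf.contDiffAt (isOpen_Ioi.mem_nhds hϱq)).differentiableAt_one
  have hpd : DifferentiableAt ℝ peos (ϱ q) :=
    (hp.contDiffAt (isOpen_Ioi.mem_nhds hϱq)).differentiableAt_one
  have hmom := heuler.momentum_eq hq β hpd hϱd (hud β)
  rw [sum_mul_vort_eq β hfd hϱd hud, hnorm q hq,
    sum_mlt_mul_pder_eq_zero β hud (Filter.eventuallyEq_of_mem hqO hnorm)]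
  apply mul_left_cancel₀ (hpϱ q hq).ne'
  linear_combination f (ϱ q) ^ 2 * hmom + f (ϱ q) * (pder d β ϱ q
    + mlt d β * u q β * ∑ μ, u q μ * pder d μ ϱ q) * hfode (ϱ q) hϱq

/-- **Orthogonality of the relativistic vorticity to the velocity** (equation (1.21)):
for a `C¹` solution of the relativistic Euler equations, `v^α ω_{αβ} = 0`. -/
theorem relativistic_vorticity_orthogonality
    (d : ℕ) (hd : 1 ≤ d) (peos f : ℝ → ℝ)
    (O : Set (Fin (d + 1) → ℝ)) (hO : IsOpen O)
    (ϱ : (Fin (d + 1) → ℝ) → ℝ) (u : (Fin (d + 1) → ℝ) → Fin (d + 1) → ℝ)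
    (hp : ContDiffOn ℝ 1 peos (Ioi 0))
    (hϱ : ContDiffOn ℝ 1 ϱ O) (hu : ContDiffOn ℝ 1 u O)
    (hϱpos : ∀ q ∈ O, 0 < ϱ q)
    (hpϱ : ∀ q ∈ O, 0 < peos (ϱ q) + ϱ q)
    (hu0 : ∀ q ∈ O, 0 < u q 0)
    (hnorm : ∀ q ∈ O, ∑ α, mlt d α * u q α * u q α = -1)
    (hf : ContDiffOn ℝ 1 f (Ioi 0)) (hfpos : ∀ y > (0 : ℝ), 0 < f y)
    (hfode : ∀ y > (0 : ℝ), deriv f y * (peos y + y) = deriv peos y * f y)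
    (heuler : RelEuler d peos O ϱ u) :
    ∀ q ∈ O, ∀ β : Fin (d + 1),
      ∑ α, f (ϱ q) * u q α * vort d f ϱ u α β q = 0 :=
  relativistic_vorticity_orthogonality_general d peos f O hO ϱ u hp hϱ hu hϱpos hpϱ hnorm hf hfode
    heuler
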